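/- If G is a finite simple graph and u is a vertex of G, then γ_gr^L(G) − 2 ≤ γ_gr^L(G − u) ≤ γ_gr^L(G), where G − u denotes the induced subgraph of G on the vertex set V(G) \ {u}. -/

import Mathlib

/-- A list of distinct vertices `s = (v_1, …, v_k)` is an *L-sequence* of `G` if for each `i`,
`N[v_i] \ ⋃_{j<i} N(v_j) ≠ ∅`, i.e. there is a vertex `w` in the closed neighborhood of `v_i`
that lies in no open neighborhood `N(v_j)` for `j < i`. -/
def IsLSeq {V : Type*} (G : SimpleGraph V) (s : List V) : Prop :=
  s.Nodup ∧ ∀ i : Fin s.length, ∃ w : V,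
    (w = s.get i ∨ G.Adj (s.get i) w) ∧
    ∀ j : Fin s.length, j < i → ¬ G.Adj (s.get j) w

/-- The L-Grundy domination number of `G`: the maximum length of an L-sequence of `G`. -/
noncomputable def LGrundy {V : Type*} [Fintype V] (G : SimpleGraph V) : ℕ :=
  sSup {k : ℕ | ∃ s : List V, IsLSeq G s ∧ s.length = k}

/-!
An L-sequence is the same as a duplicate-free list `s` together with a map `F` choosing for each
`v ∈ s` a vertex `F v ∈ N[v]` (its footprint) that no earlier vertex of `s` dominates. Such data
are transported along graph embeddings, which gives `γ_gr^L(G - u) ≤ γ_gr^L(G)`. Conversely,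
given an optimal L-sequence of `G`, drop `u` and every `v` with `F v = u`; what remains is an
L-sequence of `G - u`. At most one `v ≠ u` has `F v = u`: if `v` precedes `w` and both have
footprint `u`, then `u ∈ N(v)`, so `v` already dominates the footprint of `w`. Hence at most two
vertices are lost.
-/

def IsLFootprint {V : Type*} (G : SimpleGraph V) (s : List V) (F : V → V) : Prop :=
  (∀ v ∈ s, F v = v ∨ G.Adj v (F v)) ∧ s.Pairwise fun a b => ¬ G.Adj a (F b)

section

variable {V V' : Type*} {G : SimpleGraph V} {H : SimpleGraph V'} {s : List V} {F : V → V}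

theorem isLSeq_nil : IsLSeq G [] :=
  ⟨List.nodup_nil, fun i => i.elim0⟩

theorem isLSeq_iff_exists_isLFootprint : IsLSeq G s ↔ s.Nodup ∧ ∃ F, IsLFootprint G s F := by
  classical
  constructor
  · rintro ⟨hnd, hw⟩
    choose w hw_mem hw_new using hw
    let F : V → V := fun v =>
      if h : v ∈ s then w ⟨s.idxOf v, List.idxOf_lt_length_iff.2 h⟩ else v
    have hF : ∀ i, F (s.get i) = w i := fun i => by
      simp only [F, dif_pos (s.get_mem i), List.get_idxOf hnd i]
    refine ⟨hnd, F, fun v hv => ?_, List.pairwise_iff_get.2 fun j i hji => ?_⟩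
    · obtain ⟨i, rfl⟩ := List.mem_iff_get.1 hv
      exact hF i ▸ hw_mem i
    · exact hF i ▸ hw_new i j hji
  · rintro ⟨hnd, F, hmem, hpair⟩
    exact ⟨hnd, fun i => ⟨F (s.get i), hmem _ (s.get_mem i),
      fun j hji => List.pairwise_iff_get.1 hpair j i hji⟩⟩

theorem IsLFootprint.sublist {t : List V} (h : IsLFootprint G s F) (hts : t.Sublist s) :
    IsLFootprint G t F :=
  ⟨fun v hv => h.1 v (hts.subset hv), h.2.sublist hts⟩

theorem IsLFootprint.map {s : List V'} {F : V' → V'} (f : H ↪g G) (h : IsLFootprint H s F) :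
    IsLFootprint G (s.map f) (Function.extend f (f ∘ F) id) := by
  have hext : ∀ a, Function.extend f (f ∘ F) id (f a) = f (F a) :=
    f.injective.extend_apply _ _
  refine ⟨List.forall_mem_map.2 fun a ha => ?_, List.pairwise_map.2 (h.2.imp fun hab => ?_)⟩
  · rw [hext]
    exact (h.1 a ha).imp (congrArg f) f.map_adj_iff.2
  · rwa [hext, f.map_adj_iff]

theorem IsLSeq.map {s : List V'} (f : H ↪g G) (hs : IsLSeq H s) : IsLSeq G (s.map f) := by
  obtain ⟨hnd, F, hF⟩ := isLSeq_iff_exists_isLFootprint.1 hs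
  exact isLSeq_iff_exists_isLFootprint.2 ⟨hnd.map f.injective, _, hF.map f⟩

theorem IsLFootprint.exists_isLSeq_induce {S : Set V} (h : IsLFootprint G s F) (hs : s.Nodup)
    (hS : ∀ v ∈ s, v ∈ S ∧ F v ∈ S) :
    ∃ t : List S, IsLSeq (G.induce S) t ∧ t.length = s.length := by
  classical
  let F' : S → S := fun x => if hx : F x ∈ S then ⟨F x, hx⟩ else x
  refine ⟨s.pmap (fun v hv => ⟨v, hv.1⟩) hS, isLSeq_iff_exists_isLFootprint.2
    ⟨hs.pmap fun _ _ _ _ hab => congrArg Subtype.val hab, F', ?_, ?_⟩, List.length_pmap⟩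
  · simp only [List.mem_pmap]
    rintro _ ⟨v, hv, rfl⟩
    simpa [F', (hS v hv).2, Subtype.ext_iff] using h.1 v hv
  · exact (List.pairwise_pmap hS).2 (h.2.imp fun hab _ hb => by simpa [F', hb.2] using hab)

theorem IsLFootprint.eq_of_apply_eq {a b : V} (h : IsLFootprint G s F) (ha : a ∈ s) (hb : b ∈ s)
    (hab : F a = F b) (ha' : F a ≠ a) (hb' : F b ≠ b) : a = b := by
  by_contra hne
  have hadj_a : G.Adj a (F b) := hab ▸ (h.1 a ha).resolve_left ha'
  have hadj_b : G.Adj b (F a) := hab ▸ (h.1 b hb).resolve_left hb'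
  have hsymm : s.Pairwise fun x y => ¬ G.Adj x (F y) ∨ ¬ G.Adj y (F x) := h.2.imp Or.inl
  have : Std.Symm fun x y => ¬ G.Adj x (F y) ∨ ¬ G.Adj y (F x) := ⟨fun _ _ => Or.symm⟩
  exact (hsymm.forall ha hb hne).elim (· hadj_a) (· hadj_b)

theorem IsLFootprint.length_le_length_filter_add_two [DecidableEq V] (h : IsLFootprint G s F)
    (hs : s.Nodup) (u : V) : s.length ≤ (s.filter fun v => v ≠ u ∧ F v ≠ u).length + 2 := by
  obtain ⟨b, hb⟩ : ∃ b, ∀ v ∈ s, v ≠ u → F v = u → v = b := by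
    by_cases hex : ∃ b ∈ s, b ≠ u ∧ F b = u
    · obtain ⟨b, hbs, hbu, hFb⟩ := hex
      exact ⟨b, fun v hv hvu hFv =>
        h.eq_of_apply_eq hv hbs (hFv.trans hFb.symm) (hFv ▸ hvu.symm) (hFb ▸ hbu.symm)⟩
    · exact ⟨u, fun v hv hvu hFv => (hex ⟨v, hv, hvu, hFv⟩).elim⟩
  have hdropped : (s.filter fun v => !decide (v ≠ u ∧ F v ≠ u)) ⊆ [u, b] := by
    intro v hv
    simp only [List.mem_filter, Bool.not_eq_true', decide_eq_false_iff_not, not_and,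
      not_not] at hv
    rcases eq_or_ne v u with rfl | hvu
    · simp
    · simp [hb v hv.1 hvu (hv.2 hvu)]
  have := ((hs.filter _).subperm hdropped).length_le
  rw [List.length_eq_length_filter_add fun v => decide (v ≠ u ∧ F v ≠ u)]
  simp only [List.length_cons, List.length_nil] at this
  omega

theorem IsLSeq.exists_isLSeq_induce_ne (hs : IsLSeq G s) (u : V) :
    ∃ t : List {v : V | v ≠ u},
      IsLSeq (G.induce {v | v ≠ u}) t ∧ s.length ≤ t.length + 2 := by
  classical
  obtain ⟨hnd, F, hF⟩ := isLSeq_iff_exists_isLFootprint.1 hs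
  have hsub := List.filter_sublist (l := s) (p := fun v => decide (v ≠ u ∧ F v ≠ u))
  obtain ⟨t, ht, hlen⟩ :=
    (hF.sublist hsub).exists_isLSeq_induce (S := {v | v ≠ u}) (hsub.nodup hnd)
      fun v hv => by simpa using List.of_mem_filter hv
  exact ⟨t, ht, hlen ▸ hF.length_le_length_filter_add_two hnd u⟩

section LGrundy

variable [Fintype V] [Fintype V']

theorem bddAbove_lSeq_lengths (G : SimpleGraph V) :
    BddAbove {k : ℕ | ∃ s : List V, IsLSeq G s ∧ s.length = k} :=
  ⟨Fintype.card V, by rintro _ ⟨s, hs, rfl⟩; exact hs.1.length_le_card⟩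

theorem IsLSeq.length_le_lGrundy (hs : IsLSeq G s) : s.length ≤ LGrundy G :=
  le_csSup (bddAbove_lSeq_lengths G) ⟨s, hs, rfl⟩

theorem exists_isLSeq_length_eq_lGrundy (G : SimpleGraph V) :
    ∃ s, IsLSeq G s ∧ s.length = LGrundy G :=
  Nat.sSup_mem (s := {k | ∃ s : List V, IsLSeq G s ∧ s.length = k}) ⟨0, [], isLSeq_nil, rfl⟩
    (bddAbove_lSeq_lengths G)

theorem lGrundy_le_of_embedding (f : H ↪g G) : LGrundy H ≤ LGrundy G := by
  obtain ⟨s, hs, hlen⟩ := exists_isLSeq_length_eq_lGrundy H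
  simpa [hlen] using (hs.map f).length_le_lGrundy

end LGrundy

end

/-- If `u` is a vertex of `G`, then
`γ_gr^L(G) − 2 ≤ γ_gr^L(G − u) ≤ γ_gr^L(G)`, where `G − u` is the induced subgraph on
`V(G) \ {u}`. -/
theorem lgrundy_deleteVertex {V : Type*} [Fintype V] [DecidableEq V]
    (G : SimpleGraph V) (u : V) :
    LGrundy G - 2 ≤ LGrundy (G.induce {v : V | v ≠ u}) ∧
      LGrundy (G.induce {v : V | v ≠ u}) ≤ LGrundy G := by
  refine ⟨?_, lGrundy_le_of_embedding (SimpleGraph.Embedding.induce _)⟩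
  obtain ⟨s, hs, hlen⟩ := exists_isLSeq_length_eq_lGrundy G
  obtain ⟨t, ht, hst⟩ := hs.exists_isLSeq_induce_ne u
  have := ht.length_le_lGrundy
  omega
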